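/- For the cell 𝒱(x) of a centered random tree in dimension d ≥ 2, grown with an infinite i.i.d. sequence of split directions: almost surely there exists n_0 ≥ 1 such that for all N ≥ n_0, √d · 2^{−N/d−2√((d−1)N log(N)/d²)} ≤ diam(𝒱(x)) ≤ √d · 2^{−N/d+2√((d−1)N log(N)/d²)}. Consequently, with λ(𝒱(x)) = 2^{−N} and the normalized diameter diam^#(𝒱(x)) := diam(𝒱(x))/√d, for all N large enough: 2^{−2√((d−1)N log N)} ≤ diam^#(𝒱(x))^d / λ(𝒱(x)) ≤ 2^{2√((d−1)N log N)}. -/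

import Mathlib

open MeasureTheory ProbabilityTheory Real Set
open scoped ENNReal Classical

noncomputable section

abbrev Euc (d : ℕ) := EuclideanSpace ℝ (Fin d)

/-- Shattering coefficient `S_𝒜(n)` of a class of subsets of `ℝ^d`. -/
def shatterCoeff {d : ℕ} (𝒜 : Set (Set (Euc d))) (n : ℕ) : ℕ :=
  sSup {m : ℕ | ∃ z : Fin n → Euc d,
    m = Set.ncard {v : Fin n → Prop | ∃ A ∈ 𝒜, v = fun i => z i ∈ A}}

/-- VC dimension: the largest `n` with `S_𝒜(n) = 2^n`. -/
def vcDim {d : ℕ} (𝒜 : Set (Set (Euc d))) : ℕ :=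
  sSup {n : ℕ | 1 ≤ n ∧ shatterCoeff 𝒜 n = 2 ^ n}

/-- The local averaging estimator `ĝ_𝒱(x)` (with convention 0/0 = 0). -/
def locAvg {Ω : Type*} {d n : ℕ} (Xs : Fin n → Ω → Euc d) (Ys : Fin n → Ω → ℝ)
    (V : Set (Euc d)) (ω : Ω) : ℝ :=
  (∑ i, if Xs i ω ∈ V then Ys i ω else 0) / (∑ i, if Xs i ω ∈ V then (1:ℝ) else 0)

/-- `n ℙ_n(V)`: number of covariates falling in `V`. -/
def empCount {Ω : Type*} {d n : ℕ} (Xs : Fin n → Ω → Euc d) (V : Set (Euc d)) (ω : Ω) : ℝ :=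
  ∑ i, if Xs i ω ∈ V then (1:ℝ) else 0

/-- Local Lipschitz constant `L(V)` of `g` on `V`. -/
def locLip {d : ℕ} (g : Euc d → ℝ) (V : Set (Euc d)) : ℝ :=
  sInf {L : ℝ | 0 ≤ L ∧ ∀ x ∈ V, ∀ y ∈ V, |g x - g y| ≤ L * ‖x - y‖}

/-- Assumption (E): conditionally centered and sub-Gaussian noise. -/
def CondSubG {Ω : Type*} [MeasurableSpace Ω] {d : ℕ} (μ : Measure Ω)
    (X : Ω → Euc d) (Y : Ω → ℝ) (g : Euc d → ℝ) (σ : ℝ) : Prop :=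
  (μ[fun ω => Y ω - g (X ω) | MeasurableSpace.comap X inferInstance] =ᵐ[μ] 0)
  ∧ ∀ l : ℝ,
      (μ[fun ω => Real.exp (l * (Y ω - g (X ω))) | MeasurableSpace.comap X inferInstance])
        ≤ᵐ[μ] fun _ => Real.exp (l ^ 2 / (2 * σ ^ 2))

/-- The regression sample is i.i.d. -/
def IIDSample {Ω : Type*} [MeasurableSpace Ω] {d n : ℕ} (μ : Measure Ω)
    (Xs : Fin n → Ω → Euc d) (Ys : Fin n → Ω → ℝ) : Prop :=
  (∀ i, Measurable (Xs i)) ∧ (∀ i, Measurable (Ys i)) ∧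
  iIndepFun (fun i ω => (Xs i ω, Ys i ω)) μ ∧
  ∀ i j, IdentDistrib (fun ω => (Xs i ω, Ys i ω)) (fun ω => (Xs j ω, Ys j ω)) μ μ

/-- Closed hyper-rectangle with corners `a`, `b`. -/
def box {d : ℕ} (a b : Fin d → ℝ) : Set (Euc d) := {x | ∀ k, x k ∈ Set.Icc (a k) (b k)}

/-- Endpoints of the random tree cell containing `x` after `N` splits. -/
def treeEndpoints (d : ℕ) (x : Euc d) (D : ℕ → Fin d) (S : ℕ → ℝ) :
    ℕ → (Fin d → ℝ) × (Fin d → ℝ)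
  | 0 => (fun _ => 0, fun _ => 1)
  | N + 1 =>
    let p := treeEndpoints d x D S N
    let k := D N
    let c := p.1 k + (p.2 k - p.1 k) * S N
    if x k < c then (p.1, Function.update p.2 k c)
    else (Function.update p.1 k c, p.2)

/-- The cell of the random tree containing `x` after `N` splits. -/
def treeCell (d : ℕ) (x : Euc d) (D : ℕ → Fin d) (S : ℕ → ℝ) (N : ℕ) : Set (Euc d) :=
  box (treeEndpoints d x D S N).1 (treeEndpoints d x D S N).2

/-- Side length in direction `k` of the cell after `N` splits. -/
def cellSide (d : ℕ) (x : Euc d) (D : ℕ → Fin d) (S : ℕ → ℝ) (N : ℕ) (k : Fin d) : ℝ :=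
  (treeEndpoints d x D S N).2 k - (treeEndpoints d x D S N).1 k

/-- `S̄_i`: the length reduction at step `i`. -/
def treeSbar (d : ℕ) (x : Euc d) (D : ℕ → Fin d) (S : ℕ → ℝ) (i : ℕ) : ℝ :=
  let p := treeEndpoints d x D S i
  let k := D i
  let c := p.1 k + (p.2 k - p.1 k) * S i
  if x k < c then S i else 1 - S i

/-- Splits of a uniform random tree: i.i.d. pairs, `D_i` uniform on directions,
`S_i` uniform on `(0,1)`, all independent. -/
def UniformSplits {Ω : Type*} [MeasurableSpace Ω] (μ : Measure Ω) (d : ℕ)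
    (D : ℕ → Ω → Fin d) (S : ℕ → Ω → ℝ) : Prop :=
  (∀ i, Measurable (D i)) ∧ (∀ i, Measurable (S i)) ∧
  iIndepFun (fun i ω => (D i ω, S i ω)) μ ∧
  (∀ i k, μ {ω | D i ω = k} = (d : ℝ≥0∞)⁻¹) ∧
  (∀ i, Measure.map (S i) μ = volume.restrict (Set.Ioo (0:ℝ) 1)) ∧
  (∀ i, IndepFun (D i) (S i) μ)

/-- Splits of a centered random tree: `D_i` i.i.d. uniform on directions, `S_i = 1/2` a.s. -/
def CenteredSplits {Ω : Type*} [MeasurableSpace Ω] (μ : Measure Ω) (d : ℕ)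
    (D : ℕ → Ω → Fin d) (S : ℕ → Ω → ℝ) : Prop :=
  (∀ i, Measurable (D i)) ∧
  iIndepFun D μ ∧
  (∀ i k, μ {ω | D i ω = k} = (d : ℝ≥0∞)⁻¹) ∧
  (∀ i, ∀ᵐ ω ∂μ, S i ω = 1/2)

/-- The `k`-NN radius `τ̂_k(x)`. -/
def knnRadius {Ω : Type*} {d n : ℕ} (Xs : Fin n → Ω → Euc d) (k : ℕ) (ω : Ω) (x : Euc d) : ℝ :=
  sInf {τ : ℝ | 0 < τ ∧ (k : ℝ) ≤ ∑ i, if Xs i ω ∈ Metric.closedBall x τ then (1:ℝ) else 0}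

/-!
For centered splits the side of the cell along direction `k` is `2^(-K_k(N))`, where `K_k(N)`
counts the first `N` splits made along `k`; hence the volume is `2^(-N)` and the diameter is
`√(∑_k 4^(-K_k(N)))`. Each `K_k(N)` is a sum of `N` independent Bernoulli(`p`) variables,
`p = 1/d`. The variance-sensitive estimate `E exp(l (B - p)) ≤ exp(p (1 - p) l² (1 + |l|) / 2)`
for `|l| ≤ 1` (Hoeffding's would not do for large `d`) makes the Chernoff bound for
`|K_k(N) - N p| ≥ t_N := 2 √(p (1 - p) N log N)` of order `N^(-3/2)`, which is summable. By
Borel–Cantelli, almost surely every `K_k(N)` eventually lies within `t_N` of `N / d`, so every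
side lies between `2^(-N/d - t_N)` and `2^(-N/d + t_N)`.
-/

open Filter Topology

theorem Real.exp_le_one_add_add_sq_div_two_mul {u : ℝ} (hu : |u| ≤ 1) :
    exp u ≤ 1 + u + u ^ 2 / 2 * (1 + |u|) := by
  have h := (abs_le.mp (Real.exp_bound hu (n := 3) (by norm_num))).2
  norm_num [Finset.sum_range_succ, Nat.factorial] at h
  have : |u| ^ 3 = u ^ 2 * |u| := by rw [pow_succ, sq_abs]
  nlinarith [abs_nonneg u, sq_nonneg u]

theorem centered_bernoulli_mgf_le {p l : ℝ} (hp0 : 0 ≤ p) (hp1 : p ≤ 1) (hl : |l| ≤ 1) :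
    p * exp (l * (1 - p)) + (1 - p) * exp (l * -p) ≤
      exp (p * (1 - p) * (l ^ 2 / 2 * (1 + |l|))) := by
  have hexp : ∀ v, |v| ≤ 1 → exp (l * v) ≤ 1 + l * v + (l * v) ^ 2 / 2 * (1 + |l|) := by
    intro v hv
    have hlv : |l * v| ≤ |l| := by
      rw [abs_mul]; exact mul_le_of_le_one_right (abs_nonneg l) hv
    have := Real.exp_le_one_add_add_sq_div_two_mul (hlv.trans hl)
    nlinarith [sq_nonneg (l * v)]
  have hup := hexp (1 - p) (by rw [abs_le]; constructor <;> linarith)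
  have hdown := hexp (-p) (by rw [abs_neg, abs_le]; constructor <;> linarith)
  calc p * exp (l * (1 - p)) + (1 - p) * exp (l * -p)
      ≤ p * (1 + l * (1 - p) + (l * (1 - p)) ^ 2 / 2 * (1 + |l|)) +
          (1 - p) * (1 + l * -p + (l * -p) ^ 2 / 2 * (1 + |l|)) := by
        gcongr
    _ = p * (1 - p) * (l ^ 2 / 2 * (1 + |l|)) + 1 := by ring
    _ ≤ exp (p * (1 - p) * (l ^ 2 / 2 * (1 + |l|))) := add_one_le_exp _

def splitCount {ι : Type*} (D : ℕ → ι) (k : ι) (N : ℕ) : ℕ :=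
  ((Finset.range N).filter (D · = k)).card

theorem splitCount_succ {ι : Type*} (D : ℕ → ι) (k : ι) (N : ℕ) :
    splitCount D k (N + 1) = splitCount D k N + if D N = k then 1 else 0 := by
  unfold splitCount
  rw [Finset.range_add_one, Finset.filter_insert]
  split_ifs with h
  · rw [Finset.card_insert_of_notMem (by simp)]
  · rfl

theorem sum_splitCount {ι : Type*} [Fintype ι] (D : ℕ → ι) (N : ℕ) :
    ∑ k, splitCount D k N = N :=
  (Finset.card_eq_sum_card_fiberwise fun i _ => Finset.mem_univ (D i)).symm.trans
    (Finset.card_range N)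

namespace MeasureTheory

theorem ae_eventually_notMem_of_summable {Ω : Type*} [MeasurableSpace Ω] {μ : Measure Ω}
    [IsFiniteMeasure μ] {s : ℕ → Set Ω} {f : ℕ → ℝ} (hf : Summable f)
    (hs : ∀ᶠ n in atTop, μ.real (s n) ≤ f n) : ∀ᵐ ω ∂μ, ∀ᶠ n in atTop, ω ∉ s n := by
  have hsum : Summable fun n => μ.real (s n) :=
    hf.of_norm_bounded_eventually (by
      rw [Nat.cofinite_eq_atTop]
      filter_upwards [hs] with n hn using by rwa [Real.norm_of_nonneg measureReal_nonneg])
  refine ae_eventually_notMem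
    (ne_top_of_le_ne_top (ENNReal.ofReal_ne_top (r := ∑' n, μ.real (s n))) ?_)
  rw [ENNReal.ofReal_tsum_of_nonneg (fun _ => measureReal_nonneg) hsum]
  exact ENNReal.tsum_le_tsum fun n => (ofReal_measureReal).ge

end MeasureTheory

namespace ProbabilityTheory

variable {Ω : Type*} [MeasurableSpace Ω] {μ : Measure Ω} [IsProbabilityMeasure μ]

theorem mgf_ite {A : Set Ω} (hA : MeasurableSet A) (a b t : ℝ) :
    mgf (fun ω => if ω ∈ A then a else b) μ t =
      μ.real A * exp (t * a) + (1 - μ.real A) * exp (t * b) := by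
  simp only [mgf, apply_ite (fun y => exp (t * y))]
  change ∫ ω, A.piecewise (fun _ => exp (t * a)) (fun _ => exp (t * b)) ω ∂μ = _
  rw [integral_piecewise hA (integrable_const _).integrableOn (integrable_const _).integrableOn,
    setIntegral_const, setIntegral_const, probReal_compl_eq_one_sub hA, smul_eq_mul, smul_eq_mul]

theorem measureReal_sum_range_ge_le_of_mgf_le {X : ℕ → Ω → ℝ} (h_indep : iIndepFun X μ)
    (h_meas : ∀ i, Measurable (X i)) {l c : ℝ} (hl : 0 ≤ l)
    (h_int : ∀ i, Integrable (fun ω => exp (l * X i ω)) μ) (h_mgf : ∀ i, mgf (X i) μ l ≤ exp c)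
    (t : ℝ) (N : ℕ) :
    μ.real {ω | t ≤ ∑ i ∈ Finset.range N, X i ω} ≤ exp (-l * t + N * c) := by
  have h_int_sum := h_indep.integrable_exp_mul_sum h_meas (s := Finset.range N) fun i _ => h_int i
  calc μ.real {ω | t ≤ ∑ i ∈ Finset.range N, X i ω}
      ≤ exp (-l * t) * mgf (∑ i ∈ Finset.range N, X i) μ l := by
        simpa only [Finset.sum_apply] using measure_ge_le_exp_mul_mgf t hl h_int_sum
    _ = exp (-l * t) * ∏ i ∈ Finset.range N, mgf (X i) μ l := by rw [h_indep.mgf_sum h_meas]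
    _ ≤ exp (-l * t) * ∏ _i ∈ Finset.range N, exp c := by
        gcongr with i
        · exact fun i _ => mgf_nonneg
        · exact h_mgf i
    _ = exp (-l * t + N * c) := by
        rw [Finset.prod_const, Finset.card_range, ← exp_nat_mul, ← exp_add]

theorem mgf_centered_indicator_le {A : Set Ω} (hA : MeasurableSet A) {s : ℝ} (hs : |s| ≤ 1) :
    mgf (fun ω => if ω ∈ A then 1 - μ.real A else -μ.real A) μ s ≤
      exp (μ.real A * (1 - μ.real A) * (s ^ 2 / 2 * (1 + |s|))) := by
  rw [mgf_ite hA]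
  exact centered_bernoulli_mgf_le measureReal_nonneg measureReal_le_one hs

theorem measureReal_abs_sum_range_ge_le_of_mgf_le {X : ℕ → Ω → ℝ} (h_indep : iIndepFun X μ)
    (h_meas : ∀ i, Measurable (X i)) (h_int : ∀ i s, Integrable (fun ω => exp (s * X i ω)) μ)
    {l c : ℝ} (hl : 0 ≤ l) (h_mgf : ∀ i, mgf (X i) μ l ≤ exp c)
    (h_mgf_neg : ∀ i, mgf (X i) μ (-l) ≤ exp c) (t : ℝ) (N : ℕ) :
    μ.real {ω | t ≤ |∑ i ∈ Finset.range N, X i ω|} ≤ 2 * exp (-l * t + N * c) := by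
  have upper := measureReal_sum_range_ge_le_of_mgf_le h_indep h_meas hl (fun i => h_int i l)
    h_mgf t N
  have lower := measureReal_sum_range_ge_le_of_mgf_le (X := fun i => -X i)
    (h_indep.comp (fun _ => Neg.neg) fun _ => measurable_neg) (fun i => (h_meas i).neg) hl
    (fun i => by simpa only [Pi.neg_apply, mul_neg, neg_mul] using h_int i (-l))
    (fun i => (mgf_neg (X := X i)).trans_le (h_mgf_neg i)) t N
  calc μ.real {ω | t ≤ |∑ i ∈ Finset.range N, X i ω|}
      ≤ μ.real ({ω | t ≤ ∑ i ∈ Finset.range N, X i ω} ∪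
          {ω | t ≤ ∑ i ∈ Finset.range N, (fun i => -X i) i ω}) := by
        refine measureReal_mono fun ω hω => ?_
        simp only [Set.mem_ofPred_eq, Set.mem_union, Pi.neg_apply, Finset.sum_neg_distrib] at hω ⊢
        exact (le_abs'.1 hω).symm.imp_right fun h => by linarith
    _ ≤ 2 * exp (-l * t + N * c) := (measureReal_union_le _ _).trans (by linarith)

variable {ι : Type*} [MeasurableSpace ι] [MeasurableSingletonClass ι]

theorem measureReal_abs_splitCount_sub_ge_le {D : ℕ → Ω → ι} (h_meas : ∀ i, Measurable (D i))
    (h_indep : iIndepFun D μ) {k : ι} {p : ℝ} (hp : ∀ i, μ.real (D i ⁻¹' {k}) = p)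
    {l : ℝ} (hl0 : 0 ≤ l) (hl1 : l ≤ 1) (t : ℝ) (N : ℕ) :
    μ.real {ω | t ≤ |(splitCount (D · ω) k N : ℝ) - N * p|} ≤
      2 * exp (-l * t + N * (p * (1 - p) * (l ^ 2 / 2 * (1 + l)))) := by
  set X : ℕ → Ω → ℝ := fun i ω => if ω ∈ D i ⁻¹' {k} then 1 - p else -p
  have hX_meas (i : ℕ) : Measurable (X i) :=
    Measurable.ite (h_meas i (measurableSet_singleton k)) measurable_const measurable_const
  have hX_indep : iIndepFun X μ :=
    h_indep.comp (fun _ δ => if δ = k then 1 - p else -p)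
      fun _ => Measurable.ite (measurableSet_singleton k) measurable_const measurable_const
  have hX_sum (ω : Ω) : ∑ i ∈ Finset.range N, X i ω = splitCount (D · ω) k N - N * p := by
    simp only [X, splitCount, Finset.natCast_card_filter, Set.mem_preimage, Set.mem_singleton_iff]
    have hterm (i : ℕ) : (if D i ω = k then 1 - p else -p) = (if D i ω = k then 1 else 0) - p := by
      split_ifs <;> ring
    simp only [hterm, Finset.sum_sub_distrib, Finset.sum_const, Finset.card_range, nsmul_eq_mul]
  have hX_mgf (i : ℕ) {s : ℝ} (hs : |s| = l) :
      mgf (X i) μ s ≤ exp (p * (1 - p) * (l ^ 2 / 2 * (1 + l))) := by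
    have := mgf_centered_indicator_le (μ := μ) (h_meas i (measurableSet_singleton k))
      (hs.trans_le hl1)
    rwa [hp, hs, ← sq_abs, hs] at this
  have hX_int (i : ℕ) (s : ℝ) : Integrable (fun ω => exp (s * X i ω)) μ :=
    integrable_exp_mul_of_mem_Icc (a := -p) (b := 1 - p) (hX_meas i).aemeasurable
      (ae_of_all _ fun ω => by simp only [X]; split_ifs <;> constructor <;> linarith)
  simpa only [hX_sum] using measureReal_abs_sum_range_ge_le_of_mgf_le hX_indep hX_meas hX_int hl0
    (fun i => hX_mgf i (abs_of_nonneg hl0)) (fun i => hX_mgf i (by rw [abs_neg, abs_of_nonneg hl0]))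
    t N

theorem ae_eventually_abs_splitCount_sub_le {D : ℕ → Ω → ι} (h_meas : ∀ i, Measurable (D i))
    (h_indep : iIndepFun D μ) {k : ι} {p : ℝ} (hp0 : 0 < p) (hp1 : p < 1)
    (hp : ∀ i, μ.real (D i ⁻¹' {k}) = p) :
    ∀ᵐ ω ∂μ, ∀ᶠ N in atTop,
      |(splitCount (D · ω) k N : ℝ) - N * p| ≤ 2 * √(p * (1 - p) * N * log N) := by
  set v := p * (1 - p)
  have hv : 0 < v := mul_pos hp0 (by linarith)
  set u : ℕ → ℝ := fun N => √(log N / (v * N))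
  have hu : Tendsto u atTop (𝓝 0) := by
    have := (Real.tendsto_pow_log_div_mul_add_atTop v 0 1 hv.ne').comp tendsto_natCast_atTop_atTop
    simpa [u] using this.sqrt
  have htail : ∀ᶠ N : ℕ in atTop,
      μ.real {ω | 2 * √(v * N * log N) ≤ |(splitCount (D · ω) k N : ℝ) - N * p|} ≤
        2 * (N : ℝ) ^ (-3 / 2 : ℝ) := by
    filter_upwards [eventually_ge_atTop 1, hu.eventually (ge_mem_nhds (by norm_num : (0:ℝ) < 1/8))]
      with N hN hu8
    have hNpos : (0 : ℝ) < N := by exact_mod_cast hN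
    have hlog : 0 ≤ log N := log_nonneg (by exact_mod_cast hN)
    have hu0 : 0 ≤ u N := sqrt_nonneg _
    have hsq : v * N * u N ^ 2 = log N := by
      rw [sq_sqrt (by positivity)]; field_simp
    have ht : √(v * N * log N) = v * N * u N := by
      rw [← hsq, show v * N * (v * N * u N ^ 2) = (v * N * u N) ^ 2 by ring,
        sqrt_sq (by positivity)]
    -- Chernoff at `l = 2 u N`: since `v N (u N)² = log N`, the exponent is
    -- `-2 log N + 4 (u N) log N ≤ -(3/2) log N`.
    calc _ ≤ 2 * exp (-(2 * u N) * (2 * √(v * N * log N)) +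
            N * (v * ((2 * u N) ^ 2 / 2 * (1 + 2 * u N)))) :=
          measureReal_abs_splitCount_sub_ge_le h_meas h_indep hp (by positivity) (by linarith) _ N
      _ ≤ 2 * exp (-(3 / 2) * log N) := by
          gcongr
          rw [ht]
          nlinarith [mul_le_mul_of_nonneg_right hu8 hlog]
      _ = 2 * (N : ℝ) ^ (-3 / 2 : ℝ) := by rw [rpow_def_of_pos hNpos, mul_comm (log _), neg_div]
  filter_upwards [ae_eventually_notMem_of_summable
    ((summable_nat_rpow.2 (by norm_num)).mul_left 2) htail] with ω hω
  filter_upwards [hω] with N hN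
  exact (not_le.1 hN).le

end ProbabilityTheory

theorem diam_box {d : ℕ} {a b : Fin d → ℝ} (hab : ∀ k, a k ≤ b k) :
    Metric.diam (box a b) = √(∑ k, (b k - a k) ^ 2) := by
  have hdist : ∀ x ∈ box a b, ∀ y ∈ box a b, dist x y ≤ √(∑ k, (b k - a k) ^ 2) :=
    fun x hx y hy => by
      rw [EuclideanSpace.dist_eq]
      gcongr with k
      exact Real.dist_le_of_mem_Icc (hx k) (hy k)
  refine le_antisymm (Metric.diam_le_of_forall_dist_le (sqrt_nonneg _) hdist) ?_
  have ha : WithLp.toLp 2 a ∈ box a b := fun k => ⟨le_rfl, hab k⟩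
  have hb : WithLp.toLp 2 b ∈ box a b := fun k => ⟨hab k, le_rfl⟩
  calc √(∑ k, (b k - a k) ^ 2) = dist (WithLp.toLp 2 b) (WithLp.toLp 2 a) := by
        simp [EuclideanSpace.dist_eq, Real.dist_eq, sq_abs]
    _ ≤ Metric.diam (box a b) :=
        Metric.dist_le_diam_of_mem (Metric.isBounded_iff.2 ⟨_, hdist⟩) hb ha

theorem volume_box {d : ℕ} (a b : Fin d → ℝ) :
    volume (box a b) = ∏ k, ENNReal.ofReal (b k - a k) := by
  have : box a b = WithLp.ofLp ⁻¹' Set.univ.pi fun k => Set.Icc (a k) (b k) := by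
    ext x; simp only [box, Set.mem_preimage, Set.mem_univ_pi]; rfl
  rw [this, (PiLp.volume_preserving_ofLp (Fin d)).measure_preimage
    (MeasurableSet.univ_pi fun k => measurableSet_Icc).nullMeasurableSet, volume_pi_pi]
  simp [Real.volume_Icc]

theorem sqrt_card_mul_le_diam_box {d : ℕ} {a b : Fin d → ℝ} {L : ℝ} (hL : 0 ≤ L)
    (h : ∀ k, L ≤ b k - a k) : √d * L ≤ Metric.diam (box a b) := by
  rw [diam_box fun k => by linarith [h k], ← sqrt_sq hL, ← sqrt_mul (Nat.cast_nonneg d)]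
  gcongr
  calc (d : ℝ) * L ^ 2 = ∑ _k : Fin d, L ^ 2 := by simp
    _ ≤ ∑ k, (b k - a k) ^ 2 := by gcongr with k; exact h k

theorem diam_box_le_sqrt_card_mul {d : ℕ} {a b : Fin d → ℝ} {U : ℝ} (hU : 0 ≤ U)
    (hab : ∀ k, a k ≤ b k) (h : ∀ k, b k - a k ≤ U) : Metric.diam (box a b) ≤ √d * U := by
  rw [diam_box hab, ← sqrt_sq hU, ← sqrt_mul (Nat.cast_nonneg d)]
  gcongr
  calc ∑ k, (b k - a k) ^ 2 ≤ ∑ _k : Fin d, U ^ 2 := by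
        gcongr with k
        · exact sub_nonneg.2 (hab k)
        · exact h k
    _ = d * U ^ 2 := by simp

theorem cellSide_of_forall_eq_half {d : ℕ} (x : Euc d) (D : ℕ → Fin d) {S : ℕ → ℝ}
    (hS : ∀ i, S i = 1 / 2) (N : ℕ) (k : Fin d) :
    cellSide d x D S N k = 2⁻¹ ^ splitCount D k N := by
  induction N with
  | zero => simp [cellSide, treeEndpoints, splitCount]
  | succ N ih =>
    rw [splitCount_succ]
    simp only [cellSide, treeEndpoints, hS] at ih ⊢
    by_cases hk : k = D N
    · subst hk
      rw [if_pos rfl, pow_succ, ← ih]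
      split_ifs <;> simp only [Function.update_self] <;> ring
    · rw [if_neg (Ne.symm hk), add_zero, ← ih]
      split_ifs <;> simp only [Function.update_of_ne hk]

theorem volume_treeCell_of_forall_eq_half {d : ℕ} (x : Euc d) (D : ℕ → Fin d) {S : ℕ → ℝ}
    (hS : ∀ i, S i = 1 / 2) (N : ℕ) : (volume (treeCell d x D S N)).toReal = 2⁻¹ ^ N := by
  have hside := cellSide_of_forall_eq_half x D hS N
  have hvol : volume (treeCell d x D S N) = ENNReal.ofReal (∏ k, cellSide d x D S N k) := by
    rw [ENNReal.ofReal_prod_of_nonneg fun k _ => by rw [hside]; positivity]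
    exact volume_box _ _
  rw [hvol, ENNReal.toReal_ofReal (by simp only [hside]; positivity)]
  simp only [hside, Finset.prod_pow_eq_pow_sum, sum_splitCount]

theorem two_rpow_le_cellSide_le_of_forall_eq_half {d : ℕ} (x : Euc d) (D : ℕ → Fin d)
    {S : ℕ → ℝ} (hS : ∀ i, S i = 1 / 2) {N : ℕ} {t : ℝ} {k : Fin d}
    (hdev : |(splitCount D k N : ℝ) - N / d| ≤ t) :
    (2 : ℝ) ^ (-(N : ℝ) / d - t) ≤ cellSide d x D S N k ∧
      cellSide d x D S N k ≤ (2 : ℝ) ^ (-(N : ℝ) / d + t) := by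
  rw [cellSide_of_forall_eq_half x D hS, inv_pow, ← rpow_natCast, ← rpow_neg zero_le_two]
  obtain ⟨hlo, hhi⟩ := abs_le.1 hdev
  constructor <;> apply rpow_le_rpow_of_exponent_le one_le_two <;> rw [neg_div] <;> linarith

theorem diam_treeCell_bounds_of_forall_eq_half {d : ℕ} (x : Euc d) (D : ℕ → Fin d)
    {S : ℕ → ℝ} (hS : ∀ i, S i = 1 / 2) {N : ℕ} {t : ℝ}
    (hdev : ∀ k, |(splitCount D k N : ℝ) - N / d| ≤ t) :
    √d * (2 : ℝ) ^ (-(N : ℝ) / d - t) ≤ Metric.diam (treeCell d x D S N) ∧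
      Metric.diam (treeCell d x D S N) ≤ √d * (2 : ℝ) ^ (-(N : ℝ) / d + t) := by
  have hside k := two_rpow_le_cellSide_le_of_forall_eq_half x D hS (hdev k)
  exact ⟨sqrt_card_mul_le_diam_box (by positivity) fun k => (hside k).1,
    diam_box_le_sqrt_card_mul (by positivity)
      (fun k => sub_nonneg.1 ((rpow_nonneg zero_le_two _).trans (hside k).1))
      fun k => (hside k).2⟩

theorem two_rpow_le_pow_div_le {a t r : ℝ} (n : ℕ) (hlo : (2 : ℝ) ^ (a - t) ≤ r)
    (hhi : r ≤ (2 : ℝ) ^ (a + t)) :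
    (2 : ℝ) ^ (-(n * t)) ≤ r ^ n / (2 : ℝ) ^ (n * a) ∧
      r ^ n / (2 : ℝ) ^ (n * a) ≤ (2 : ℝ) ^ (n * t) := by
  have hpow (y : ℝ) : (2 : ℝ) ^ (n * y) = ((2 : ℝ) ^ y) ^ n := by
    rw [← rpow_natCast, ← rpow_mul zero_le_two, mul_comm]
  have h0 : (0 : ℝ) < 2 ^ (n * a) := by positivity
  constructor
  · rw [le_div_iff₀ h0, ← rpow_add two_pos, show -(n * t) + n * a = n * (a - t) by ring, hpow]
    exact pow_le_pow_left₀ (by positivity) hlo n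
  · rw [div_le_iff₀ h0, ← rpow_add two_pos, show n * t + n * a = n * (a + t) by ring, hpow]
    exact pow_le_pow_left₀ ((rpow_nonneg zero_le_two _).trans hlo) hhi n

theorem diam_pow_div_volume_treeCell_bounds_of_forall_eq_half {d : ℕ} (hd : 0 < d)
    (x : Euc d) (D : ℕ → Fin d) {S : ℕ → ℝ} (hS : ∀ i, S i = 1 / 2) {N : ℕ} {t : ℝ}
    (hdev : ∀ k, |(splitCount D k N : ℝ) - N / d| ≤ t) :
    (2 : ℝ) ^ (-(d * t)) ≤
        (Metric.diam (treeCell d x D S N) / √d) ^ d / (volume (treeCell d x D S N)).toReal ∧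
      (Metric.diam (treeCell d x D S N) / √d) ^ d / (volume (treeCell d x D S N)).toReal ≤
        (2 : ℝ) ^ (d * t) := by
  have hsqrt : 0 < √(d : ℝ) := sqrt_pos.2 (Nat.cast_pos.2 hd)
  obtain ⟨hlo, hhi⟩ := diam_treeCell_bounds_of_forall_eq_half x D hS hdev
  have hvol : (volume (treeCell d x D S N)).toReal = (2 : ℝ) ^ (d * (-(N : ℝ) / d)) := by
    rw [volume_treeCell_of_forall_eq_half x D hS, mul_div_cancel₀ _ (Nat.cast_ne_zero.2 hd.ne'),
      rpow_neg zero_le_two, rpow_natCast, inv_pow]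
  rw [hvol]
  exact two_rpow_le_pow_div_le d ((le_div_iff₀' hsqrt).2 hlo) ((div_le_iff₀' hsqrt).2 hhi)

theorem statement16_general {d : ℕ} (hd : 2 ≤ d)
    {Ω : Type*} [MeasurableSpace Ω] {μ : Measure Ω} [IsProbabilityMeasure μ]
    (x : Euc d)
    (D : ℕ → Ω → Fin d) (S : ℕ → Ω → ℝ)
    (hsplit : CenteredSplits μ d D S) :
    ∀ᵐ ω ∂μ,
      (∃ n0 : ℕ, 1 ≤ n0 ∧ ∀ N : ℕ, n0 ≤ N →
        Real.sqrt d * (2 : ℝ) ^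
            (-(N : ℝ) / d - 2 * Real.sqrt (((d : ℝ) - 1) * N * Real.log N / (d : ℝ) ^ 2)) ≤
          Metric.diam (treeCell d x (fun i => D i ω) (fun i => S i ω) N) ∧
        Metric.diam (treeCell d x (fun i => D i ω) (fun i => S i ω) N) ≤
          Real.sqrt d * (2 : ℝ) ^
            (-(N : ℝ) / d + 2 * Real.sqrt (((d : ℝ) - 1) * N * Real.log N / (d : ℝ) ^ 2)))
      ∧ (∃ n1 : ℕ, ∀ N : ℕ, n1 ≤ N →
        (2 : ℝ) ^ (-(2 * Real.sqrt (((d : ℝ) - 1) * N * Real.log N))) ≤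
          (Metric.diam (treeCell d x (fun i => D i ω) (fun i => S i ω) N) / Real.sqrt d) ^ d /
            (volume (treeCell d x (fun i => D i ω) (fun i => S i ω) N)).toReal ∧
        (Metric.diam (treeCell d x (fun i => D i ω) (fun i => S i ω) N) / Real.sqrt d) ^ d /
            (volume (treeCell d x (fun i => D i ω) (fun i => S i ω) N)).toReal ≤
          (2 : ℝ) ^ (2 * Real.sqrt (((d : ℝ) - 1) * N * Real.log N))) := by
  obtain ⟨hD_meas, hD_indep, hD_unif, hS⟩ := hsplit
  have hd0 : (0 : ℝ) < d := by positivity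
  have hp (i : ℕ) (k : Fin d) : μ.real (D i ⁻¹' {k}) = (d : ℝ)⁻¹ := by
    change (μ {ω | D i ω = k}).toReal = _
    rw [hD_unif i k, ENNReal.toReal_inv, ENNReal.toReal_natCast]
  have hvar (N : ℕ) :
      (d : ℝ)⁻¹ * (1 - (d : ℝ)⁻¹) * N * log N = ((d : ℝ) - 1) * N * log N / (d : ℝ) ^ 2 := by
    field_simp
  filter_upwards [ae_all_iff.2 hS, ae_all_iff.2 fun k =>
    ae_eventually_abs_splitCount_sub_le hD_meas hD_indep (inv_pos.2 hd0)
      (inv_lt_one_of_one_lt₀ (by exact_mod_cast hd)) (hp · k)] with ω hSω hdevω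
  obtain ⟨n0, hn0⟩ := eventually_atTop.1 (eventually_all.2 hdevω)
  have hdev (N : ℕ) (hN : n0 ≤ N) (k : Fin d) : |(splitCount (D · ω) k N : ℝ) - N / d| ≤
      2 * √(((d : ℝ) - 1) * N * log N / (d : ℝ) ^ 2) := by
    rw [div_eq_mul_inv, ← hvar]
    exact hn0 N hN k
  refine ⟨⟨n0 + 1, Nat.le_add_left 1 n0, fun N hN =>
    diam_treeCell_bounds_of_forall_eq_half x _ hSω (hdev N (by omega))⟩, ⟨n0, fun N hN => ?_⟩⟩
  have hdt : (d : ℝ) * (2 * √(((d : ℝ) - 1) * N * log N / (d : ℝ) ^ 2)) =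
      2 * √(((d : ℝ) - 1) * N * log N) := by
    rw [sqrt_div' _ (sq_nonneg _), sqrt_sq hd0.le]
    field_simp
  simpa only [hdt] using
    diam_pow_div_volume_treeCell_bounds_of_forall_eq_half (by omega) x _ hSω (hdev N hN)

/-- almost sure asymptotic bounds for centered random tree cells
(Corollary `cor22`). -/
theorem statement16 {d : ℕ} (hd : 2 ≤ d)
    {Ω : Type*} [MeasurableSpace Ω] {μ : Measure Ω} [IsProbabilityMeasure μ]
    (x : Euc d) (hx : ∀ j, x j ∈ Set.Icc (0:ℝ) 1)
    (D : ℕ → Ω → Fin d) (S : ℕ → Ω → ℝ)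
    (hsplit : CenteredSplits μ d D S) :
    ∀ᵐ ω ∂μ,
      (∃ n0 : ℕ, 1 ≤ n0 ∧ ∀ N : ℕ, n0 ≤ N →
        Real.sqrt d * (2 : ℝ) ^
            (-(N : ℝ) / d - 2 * Real.sqrt (((d : ℝ) - 1) * N * Real.log N / (d : ℝ) ^ 2)) ≤
          Metric.diam (treeCell d x (fun i => D i ω) (fun i => S i ω) N) ∧
        Metric.diam (treeCell d x (fun i => D i ω) (fun i => S i ω) N) ≤
          Real.sqrt d * (2 : ℝ) ^
            (-(N : ℝ) / d + 2 * Real.sqrt (((d : ℝ) - 1) * N * Real.log N / (d : ℝ) ^ 2)))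
      ∧ (∃ n1 : ℕ, ∀ N : ℕ, n1 ≤ N →
        (2 : ℝ) ^ (-(2 * Real.sqrt (((d : ℝ) - 1) * N * Real.log N))) ≤
          (Metric.diam (treeCell d x (fun i => D i ω) (fun i => S i ω) N) / Real.sqrt d) ^ d /
            (volume (treeCell d x (fun i => D i ω) (fun i => S i ω) N)).toReal ∧
        (Metric.diam (treeCell d x (fun i => D i ω) (fun i => S i ω) N) / Real.sqrt d) ^ d /
            (volume (treeCell d x (fun i => D i ω) (fun i => S i ω) N)).toReal ≤
          (2 : ℝ) ^ (2 * Real.sqrt (((d : ℝ) - 1) * N * Real.log N))) :=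
  statement16_general hd x D S hsplit

end
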